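/- arXiv:1911.10889 — 3 statements merged into one kernel-verified Lean document; each statement's English description precedes it below -/
import Mathlib

section
/- If the truncated mean function ℓ(x) = ∫₀ˣ (1 - F(t)) dt of a nonnegative random variable X is slowly varying at infinity and E[X] = ∞, then ∫₀ˣ t dF(t) ∼ ℓ(x) as x → ∞, i.e., E[X; X ≤ x] / ℓ(x) → 1. -/
open MeasureTheory Filter Set Asymptotics Topology

/-- Tail of a distribution: `P[X > x]`. -/
noncomputable def tailF (μ : Measure ℝ) (x : ℝ) : ℝ := (μ (Set.Ioi x)).toReal

/-- Truncated mean `ℓ(x) = ∫₀ˣ (1 - F(t)) dt`. -/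
noncomputable def ell (μ : Measure ℝ) (x : ℝ) : ℝ := ∫ t in (0:ℝ)..x, tailF μ t

/-- A function is slowly varying at infinity. -/
def SlowlyVarying (f : ℝ → ℝ) : Prop :=
  (∀ᶠ x in atTop, 0 < f x) ∧
    ∀ c : ℝ, 1 < c → Tendsto (fun x => f (c * x) / f x) atTop (𝓝 1)

/-! Writing `E[min X x]` in two ways gives the exact identity
`E[X; X ≤ x] = ℓ(x) - x P[X > x]`: the layer-cake formula yields `ℓ(x)`, and splitting at `x`
yields `E[X; X ≤ x] + x P[X > x]`. Since the tail is antitone,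
`(x/2) P[X > x] ≤ ℓ(x) - ℓ(x/2)`, and slow variation makes the right side `o(ℓ(x))`. -/

lemma ae_nonneg_of_measure_Iio_zero {μ : Measure ℝ} (hnn : μ (Iio 0) = 0) : ∀ᵐ a ∂μ, 0 ≤ a := by
  rw [ae_iff]
  simp only [not_le]
  exact hnn

section Tail

variable (μ : Measure ℝ)

lemma tailF_nonneg (x : ℝ) : 0 ≤ tailF μ x := ENNReal.toReal_nonneg

variable [IsFiniteMeasure μ]

lemma tailF_antitone : Antitone (tailF μ) := fun _ _ hab =>
  ENNReal.toReal_mono (measure_ne_top μ _) (measure_mono (Ioi_subset_Ioi hab))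

lemma intervalIntegrable_tailF (a b : ℝ) : IntervalIntegrable (tailF μ) volume a b :=
  (tailF_antitone μ).intervalIntegrable

lemma sub_mul_tailF_le_ell_sub {a b : ℝ} (hab : a ≤ b) :
    (b - a) * tailF μ b ≤ ell μ b - ell μ a := by
  have hsplit : ell μ b - ell μ a = ∫ t in a..b, tailF μ t :=
    intervalIntegral.integral_interval_sub_left (intervalIntegrable_tailF μ 0 b)
      (intervalIntegrable_tailF μ 0 a)
  calc (b - a) * tailF μ b = ∫ _ in a..b, tailF μ b := by simp
    _ ≤ ∫ t in a..b, tailF μ t :=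
      intervalIntegral.integral_mono_on hab intervalIntegrable_const
        (intervalIntegrable_tailF μ a b) fun t ht => tailF_antitone μ ht.2
    _ = ell μ b - ell μ a := hsplit.symm

variable {μ} (hnn : μ (Iio 0) = 0) {x : ℝ} (hx : 0 ≤ x)
include hnn hx

lemma integrable_min_const : Integrable (fun a => min a x) μ :=
  Integrable.of_bound (by fun_prop) x <|
    (ae_nonneg_of_measure_Iio_zero hnn).mono fun a ha => by
      rw [Real.norm_of_nonneg (le_min ha hx)]; exact min_le_right a x

lemma integral_min_const_eq_ell : ∫ a, min a x ∂μ = ell μ x := by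
  rw [(integrable_min_const hnn hx).integral_eq_integral_meas_lt
      ((ae_nonneg_of_measure_Iio_zero hnn).mono fun a ha => le_min ha hx),
    setIntegral_eq_of_subset_of_forall_sdiff_eq_zero (s := Ioo 0 x) measurableSet_Ioi
      Ioo_subset_Ioi_self ?_,
    ell, intervalIntegral.integral_of_le hx, integral_Ioc_eq_integral_Ioo]
  · refine setIntegral_congr_fun measurableSet_Ioo fun t ht => ?_
    simp [tailF, measureReal_def, ht.2, Ioi]
  · intro t ht
    have hxt : x ≤ t := by
      simp only [Set.mem_sdiff, mem_Ioi, mem_Ioo, not_and, not_lt] at ht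
      exact ht.2 ht.1
    simp [hxt.not_gt]

lemma integral_min_const_eq : ∫ a, min a x ∂μ = ∫ t in Icc 0 x, t ∂μ + x * tailF μ x := by
  have hIcc : Icc 0 x =ᵐ[μ] Iic x := by
    refine ae_eq_set.mpr ⟨?_, measure_mono_null (fun a ha => ?_) hnn⟩
    · rw [sdiff_eq_empty.mpr Icc_subset_Iic_self, measure_empty]
    · simp only [Set.mem_sdiff, mem_Iic, mem_Icc, not_and] at ha
      exact not_le.mp fun h => ha.2 h ha.1
  rw [← integral_add_compl measurableSet_Iic (integrable_min_const hnn hx), compl_Iic,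
    setIntegral_congr_set hIcc, setIntegral_congr_fun measurableSet_Ioi
      (fun a (ha : x < a) => min_eq_right ha.le), setIntegral_const,
    setIntegral_congr_fun measurableSet_Iic (fun a (ha : a ≤ x) => min_eq_left ha),
    smul_eq_mul, mul_comm, tailF, measureReal_def]

lemma setIntegral_Icc_eq_ell_sub : ∫ t in Icc 0 x, t ∂μ = ell μ x - x * tailF μ x := by
  rw [← integral_min_const_eq_ell hnn hx, integral_min_const_eq hnn hx]
  ring

end Tail

lemma SlowlyVarying.tendsto_half_div {f : ℝ → ℝ} (hf : SlowlyVarying f) :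
    Tendsto (fun x => f (x / 2) / f x) atTop (𝓝 1) := by
  have h := ((hf.2 2 one_lt_two).comp (tendsto_id.atTop_div_const two_pos)).inv₀ one_ne_zero
  rw [inv_one] at h
  refine h.congr fun x => ?_
  simp [mul_div_cancel₀ x two_ne_zero]

lemma tendsto_mul_tailF_div_ell (μ : Measure ℝ) [IsFiniteMeasure μ] (hsv : SlowlyVarying (ell μ)) :
    Tendsto (fun x => x * tailF μ x / ell μ x) atTop (𝓝 0) := by
  have hub : Tendsto (fun x => 2 * (1 - ell μ (x / 2) / ell μ x)) atTop (𝓝 0) := by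
    simpa using ((tendsto_const_nhds (x := (1 : ℝ))).sub hsv.tendsto_half_div).const_mul 2
  refine tendsto_of_tendsto_of_tendsto_of_le_of_le' tendsto_const_nhds hub ?_ ?_
  all_goals filter_upwards [hsv.1, eventually_ge_atTop 0] with x hpos hx
  · exact div_nonneg (mul_nonneg hx (tailF_nonneg μ x)) hpos.le
  · have hdiff := sub_mul_tailF_le_ell_sub μ (by linarith : x / 2 ≤ x)
    rw [div_le_iff₀ hpos, mul_assoc, sub_mul, one_mul, div_mul_cancel₀ _ hpos.ne']
    linarith

theorem stmt1_general (μ : Measure ℝ) [IsProbabilityMeasure μ]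
    (hnn : μ (Set.Iio 0) = 0)
    (hsv : SlowlyVarying (ell μ)) :
    Tendsto (fun x => (∫ t in Set.Icc 0 x, t ∂μ) / ell μ x) atTop (𝓝 1) := by
  have h := (tendsto_const_nhds (x := (1 : ℝ))).sub (tendsto_mul_tailF_div_ell μ hsv)
  rw [sub_zero] at h
  refine h.congr' ?_
  filter_upwards [hsv.1, eventually_ge_atTop 0] with x hpos hx
  rw [setIntegral_Icc_eq_ell_sub hnn hx, sub_div, div_self hpos.ne']

/-- If `ℓ` is slowly varying and `E X = ∞`, then `∫₀ˣ t dF(t) ∼ ℓ(x)` as `x → ∞`. -/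
theorem stmt1 (μ : Measure ℝ) [IsProbabilityMeasure μ]
    (hnn : μ (Set.Iio 0) = 0)
    (hmean : ∫⁻ x, ENNReal.ofReal |x| ∂μ = ⊤)
    (hsv : SlowlyVarying (ell μ)) :
    Tendsto (fun x => (∫ t in Set.Icc 0 x, t ∂μ) / ell μ x) atTop (𝓝 1) :=
  stmt1_general μ hnn hsv
end

section
/- Let F be a distribution on ℝ with E|X| = ∞ satisfying condition (Hb): ∫_{x₀}^∞ H(x)/A²(x) dx < ∞ for some x₀ > 0, where A is eventually positive with limsup A = ∞. Then ∫ₓ^∞ K(t)/A²(t) dt = 1/A(x) for all large x; in particular A(x) → ∞ as x → ∞. -/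
/-! Where `A > 0`, the function `1/A` has right derivative `-K/A²` at every point, because `K` is
right-continuous; hence `∫ₓʸ K/A² = 1/A(x) - 1/A(y)`. Since `|K| ≤ H`, condition (Hb) makes `K/A²`
integrable at infinity, so `1/A(y)` converges as `y → ∞`. As `A` is unbounded above, the limit
must be `0`, which gives both the formula and `A → ∞`. -/

open MeasureTheory Filter Set Asymptotics Topology

/-- Two-sided tail `H(x) = P[|X| > x] = 1 - F(x) + F(-x-0)`. -/
noncomputable def Hf (μ : Measure ℝ) (x : ℝ) : ℝ := (μ {y : ℝ | x < |y|}).toReal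

/-- `K(x) = P[X > x] - P[X < -x] = 1 - F(x) - F(-x-0)`. -/
noncomputable def Kf (μ : Measure ℝ) (x : ℝ) : ℝ :=
  (μ (Set.Ioi x)).toReal - (μ (Set.Iio (-x))).toReal

/-- `A(x) = ∫₀ˣ K(t) dt`. -/
noncomputable def Af (μ : Measure ℝ) (x : ℝ) : ℝ := ∫ t in (0:ℝ)..x, Kf μ t

/-- `ℓ(x) = ∫₀ˣ H(t) dt`. -/
noncomputable def ellH (μ : Measure ℝ) (x : ℝ) : ℝ := ∫ t in (0:ℝ)..x, Hf μ t

/-- `m(x)`, defined by `1/m(x) = ∫ₓ^∞ H(t)/A²(t) dt`. -/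
noncomputable def mF (μ : Measure ℝ) (x : ℝ) : ℝ :=
  (∫ t in Set.Ioi x, Hf μ t / (Af μ t) ^ 2)⁻¹

/-- `r₊(x) = ∫ₓ^∞ (1-F(t))/A²(t) dt`. -/
noncomputable def rPlus (μ : Measure ℝ) (x : ℝ) : ℝ :=
  ∫ t in Set.Ioi x, tailF μ t / (Af μ t) ^ 2

/-- `r₋(x) = ∫ₓ^∞ F(-t)/A²(t) dt`. -/
noncomputable def rMinus (μ : Measure ℝ) (x : ℝ) : ℝ :=
  ∫ t in Set.Ioi x, (μ (Set.Iio (-t))).toReal / (Af μ t) ^ 2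

/-- Condition (Ha): `A(x)/(x H(x)) → ∞`, i.e. positive relative stability. -/
def HaCond (μ : Measure ℝ) : Prop :=
  Tendsto (fun x => Af μ x / (x * Hf μ x)) atTop atTop

/-- Condition (Hb): `∫_{x₀}^∞ H(x)/A²(x) dx < ∞` for some `x₀ > 0`
with `A` positive on `[x₀, ∞)`. -/
def HbCond (μ : Measure ℝ) : Prop :=
  ∃ x₀ : ℝ, 0 < x₀ ∧ (∀ x ≥ x₀, 0 < Af μ x) ∧
    IntegrableOn (fun x => Hf μ x / (Af μ x) ^ 2) (Set.Ioi x₀)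

/-- `X` is arithmetic: `X/h ∈ ℤ` almost surely for some `h > 0`. -/
def IsArith (μ : Measure ℝ) : Prop :=
  ∃ h : ℝ, 0 < h ∧ μ {x : ℝ | ∃ n : ℤ, x = n * h} = 1

/-- Characteristic function `φ(θ) = E[e^{iθX}]`. -/
noncomputable def charF (μ : Measure ℝ) (θ : ℝ) : ℂ :=
  ∫ x, Complex.exp (Complex.I * θ * x) ∂μ

open ProbabilityTheory

section

variable (μ : Measure ℝ)

lemma antitone_measure_Ioi_toReal [IsFiniteMeasure μ] :
    Antitone fun x : ℝ => (μ (Ioi x)).toReal := fun _ _ hab =>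
  ENNReal.toReal_mono (measure_ne_top μ _) (measure_mono (Ioi_subset_Ioi hab))

lemma antitone_measure_Iio_neg_toReal [IsFiniteMeasure μ] :
    Antitone fun x : ℝ => (μ (Iio (-x))).toReal := fun _ _ hab =>
  ENNReal.toReal_mono (measure_ne_top μ _) (measure_mono (Iio_subset_Iio (neg_le_neg hab)))

lemma measure_Ioi_toReal_eq_one_sub_cdf [IsProbabilityMeasure μ] (x : ℝ) :
    (μ (Ioi x)).toReal = 1 - cdf μ x := by
  rw [← compl_Iic, ← measureReal_def, probReal_compl_eq_one_sub measurableSet_Iic, cdf_eq_real]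

lemma continuousWithinAt_measure_Ioi_toReal [IsProbabilityMeasure μ] (t : ℝ) :
    ContinuousWithinAt (fun x => (μ (Ioi x)).toReal) (Ici t) t := by
  simp_rw [measure_Ioi_toReal_eq_one_sub_cdf]
  exact continuousWithinAt_const.sub ((cdf μ).right_continuous t)

lemma measure_Iio_neg_eq_map_neg (x : ℝ) :
    μ (Iio (-x)) = μ.map Neg.neg (Ioi x) := by
  rw [Measure.map_apply measurable_neg measurableSet_Ioi, Set.neg_preimage, Set.neg_Ioi]

lemma continuousWithinAt_measure_Iio_neg_toReal [IsProbabilityMeasure μ]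
    (t : ℝ) : ContinuousWithinAt (fun x => (μ (Iio (-x))).toReal) (Ici t) t := by
  have : IsProbabilityMeasure (μ.map Neg.neg) :=
    Measure.isProbabilityMeasure_map measurable_neg.aemeasurable
  simp_rw [measure_Iio_neg_eq_map_neg]
  exact continuousWithinAt_measure_Ioi_toReal _ t

lemma measurable_Kf [IsFiniteMeasure μ] : Measurable (Kf μ) :=
  (antitone_measure_Ioi_toReal μ).measurable.sub (antitone_measure_Iio_neg_toReal μ).measurable

lemma intervalIntegrable_Kf [IsFiniteMeasure μ] (a b : ℝ) :
    IntervalIntegrable (Kf μ) volume a b :=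
  (antitone_measure_Ioi_toReal μ).intervalIntegrable.sub
    (antitone_measure_Iio_neg_toReal μ).intervalIntegrable

lemma continuousWithinAt_Kf [IsProbabilityMeasure μ] (t : ℝ) :
    ContinuousWithinAt (Kf μ) (Ici t) t :=
  (continuousWithinAt_measure_Ioi_toReal μ t).sub (continuousWithinAt_measure_Iio_neg_toReal μ t)

lemma abs_Kf_le_Hf [IsFiniteMeasure μ] (t : ℝ) : |Kf μ t| ≤ Hf μ t := by
  have hpos : (μ (Ioi t)).toReal ≤ Hf μ t :=
    ENNReal.toReal_mono (measure_ne_top μ _)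
      (measure_mono fun y (hy : t < y) => hy.trans_le (le_abs_self y))
  have hneg : (μ (Iio (-t))).toReal ≤ Hf μ t :=
    ENNReal.toReal_mono (measure_ne_top μ _)
      (measure_mono fun y (hy : y < -t) => (lt_neg.1 hy).trans_le (neg_le_abs y))
  exact abs_sub_le_of_nonneg_of_le ENNReal.toReal_nonneg hpos ENNReal.toReal_nonneg hneg

lemma continuous_Af [IsFiniteMeasure μ] : Continuous (Af μ) :=
  intervalIntegral.continuous_primitive (intervalIntegrable_Kf μ) 0

lemma hasDerivWithinAt_Af [IsProbabilityMeasure μ] (t : ℝ) :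
    HasDerivWithinAt (Af μ) (Kf μ t) (Ici t) t :=
  intervalIntegral.integral_hasDerivWithinAt_right (intervalIntegrable_Kf μ 0 t)
    (measurable_Kf μ).stronglyMeasurable.stronglyMeasurableAtFilter
    ((continuousWithinAt_Kf μ t).mono Ioi_subset_Ici_self)

lemma integrableOn_Kf_div_Af_sq_of_Hf [IsFiniteMeasure μ] {s : Set ℝ}
    (h : IntegrableOn (fun t => Hf μ t / Af μ t ^ 2) s) :
    IntegrableOn (fun t => Kf μ t / Af μ t ^ 2) s := by
  have hmeas := (measurable_Kf μ).div ((continuous_Af μ).measurable.pow_const 2)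
  refine h.mono' hmeas.aestronglyMeasurable (Eventually.of_forall fun t => ?_)
  rw [Real.norm_eq_abs, abs_div, abs_of_nonneg (sq_nonneg (Af μ t))]
  exact div_le_div_of_nonneg_right (abs_Kf_le_Hf μ t) (sq_nonneg _)

lemma integral_Kf_div_Af_sq [IsProbabilityMeasure μ] {x y : ℝ} (hxy : x ≤ y)
    (hpos : ∀ t ∈ Icc x y, 0 < Af μ t)
    (hint : IntervalIntegrable (fun t => Kf μ t / Af μ t ^ 2) volume x y) :
    ∫ t in x..y, Kf μ t / Af μ t ^ 2 = (Af μ x)⁻¹ - (Af μ y)⁻¹ := by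
  have hderiv : ∀ t ∈ Ioo x y,
      HasDerivWithinAt (fun u => -(Af μ u)⁻¹) (Kf μ t / Af μ t ^ 2) (Ioi t) t := fun t ht => by
    have h := ((hasDerivWithinAt_Af μ t).inv (hpos t (Ioo_subset_Icc_self ht)).ne').neg
    rw [neg_div, neg_neg] at h
    exact h.mono Ioi_subset_Ici_self
  have hcont : ContinuousOn (fun u => -(Af μ u)⁻¹) (Icc x y) :=
    ((continuous_Af μ).continuousOn.inv₀ fun t ht => (hpos t ht).ne').neg
  rw [intervalIntegral.integral_eq_sub_of_hasDeriv_right_of_le hxy hcont hderiv hint]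
  ring

lemma tendsto_inv_Af [IsProbabilityMeasure μ] {x : ℝ} (hpos : ∀ t ≥ x, 0 < Af μ t)
    (hint : IntegrableOn (fun t => Kf μ t / Af μ t ^ 2) (Ioi x)) :
    Tendsto (fun y => (Af μ y)⁻¹) atTop
      (𝓝 ((Af μ x)⁻¹ - ∫ t in Ioi x, Kf μ t / Af μ t ^ 2)) := by
  have h := (intervalIntegral_tendsto_integral_Ioi x hint tendsto_id).const_sub (Af μ x)⁻¹
  refine h.congr' ?_
  filter_upwards [eventually_ge_atTop x] with y hy
  rw [id, integral_Kf_div_Af_sq μ hy (fun t ht => hpos t ht.1)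
    ((intervalIntegrable_iff_integrableOn_Ioc_of_le hy).2 (hint.mono_set Ioc_subset_Ioi_self)),
    sub_sub_cancel]

end

lemma eq_zero_of_tendsto_inv_of_frequently_lt {α : Type*} {l : Filter α} [l.NeBot]
    {f : α → ℝ} {L : ℝ} (hlim : Tendsto (fun y => (f y)⁻¹) l (𝓝 L)) (hpos : ∀ᶠ y in l, 0 < f y)
    (hfreq : ∀ c, ∃ᶠ y in l, c < f y) : L = 0 := by
  have hL : 0 ≤ L := ge_of_tendsto hlim (hpos.mono fun y hy => (inv_pos.2 hy).le)
  refine le_antisymm (not_lt.1 fun hL' => ?_) hL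
  have hsmall : ∀ᶠ y in l, L / 2 < (f y)⁻¹ := hlim.eventually (lt_mem_nhds (half_lt_self hL'))
  obtain ⟨y, hy, hfy⟩ := ((hfreq (L / 2)⁻¹).and_eventually hsmall).exists
  exact (inv_lt_of_inv_lt₀ (half_pos hL') hy).not_gt hfy

theorem stmt9_general (μ : Measure ℝ) [IsProbabilityMeasure μ]
    (hHb : HbCond μ)
    (hlimsup : ∀ c : ℝ, ∃ᶠ x in atTop, c < Af μ x) :
    (∀ᶠ x in atTop, (∫ t in Set.Ioi x, Kf μ t / (Af μ t) ^ 2) = 1 / Af μ x) ∧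
    Tendsto (Af μ) atTop atTop := by
  obtain ⟨x₀, -, hpos, hint⟩ := hHb
  have hlim : ∀ x ≥ x₀, Tendsto (fun y => (Af μ y)⁻¹) atTop
      (𝓝 ((Af μ x)⁻¹ - ∫ t in Ioi x, Kf μ t / Af μ t ^ 2)) := fun x hx =>
    tendsto_inv_Af μ (fun t ht => hpos t (hx.trans ht))
      ((integrableOn_Kf_div_Af_sq_of_Hf μ hint).mono_set (Ioi_subset_Ioi hx))
  have hApos : ∀ᶠ y in atTop, 0 < Af μ y := eventually_atTop.2 ⟨x₀, hpos⟩
  have hL := eq_zero_of_tendsto_inv_of_frequently_lt (hlim x₀ le_rfl) hApos hlimsup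
  have hinv : Tendsto (fun y => (Af μ y)⁻¹) atTop (𝓝 0) := hL ▸ hlim x₀ le_rfl
  refine ⟨?_, ?_⟩
  · filter_upwards [eventually_ge_atTop x₀] with x hx
    have := tendsto_nhds_unique (hlim x hx) hinv
    rw [one_div]
    linarith
  · have hinv' : Tendsto (fun y => (Af μ y)⁻¹) atTop (𝓝[>] 0) :=
      tendsto_nhdsWithin_iff.2 ⟨hinv, hApos.mono fun y => inv_pos.2⟩
    simpa only [Pi.inv_def, inv_inv] using hinv'.inv_tendsto_nhdsGT_zero

/-- Under (Hb) together with eventual positivity and `limsup A = ∞`,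
`∫ₓ^∞ K(t)/A²(t) dt = 1/A(x)` for all large `x`, and `A(x) → ∞`. -/
theorem stmt9 (μ : Measure ℝ) [IsProbabilityMeasure μ]
    (hmean : ∫⁻ x, ENNReal.ofReal |x| ∂μ = ⊤)
    (hHb : HbCond μ)
    (hlimsup : ∀ c : ℝ, ∃ᶠ x in atTop, c < Af μ x) :
    (∀ᶠ x in atTop, (∫ t in Set.Ioi x, Kf μ t / (Af μ t) ^ 2) = 1 / Af μ x) ∧
    Tendsto (Af μ) atTop atTop :=
  stmt9_general μ hHb hlimsup
end

section
/- Under conditions (Ha) and (Hb), Schwarz's inequality gives 1/(m(x)ℓ(x)) ≥ (∫ₓ^∞ H(t)/(ℓ(t)A(t)) dt)². Consequently, if ℓ(x)/A(x) is almost increasing (i.e., there exist constants C, x₀ such that C ℓ(y)/A(y) ≥ ℓ(x)/A(x) whenever y > x > x₀), then there exists C' < ∞ with m(x)ℓ(x) ≤ C' A²(x) for all large x. -/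
open MeasureTheory Filter Set Asymptotics Topology

set_option linter.unusedSectionVars false
section lems
variable {μ : Measure ℝ} [IsProbabilityMeasure μ]

lemma H_anti : Antitone (Hf μ) := by
  intro a b hab
  exact ENNReal.toReal_mono (measure_ne_top μ _)
    (measure_mono (fun y hy => lt_of_le_of_lt hab hy))

lemma H_meas : Measurable (Hf μ) := H_anti.measurable

lemma H_nonneg (t : ℝ) : 0 ≤ Hf μ t := ENNReal.toReal_nonneg

lemma H_le_one (t : ℝ) : Hf μ t ≤ 1 := by
  have := prob_le_one (μ := μ) (s := {y : ℝ | t < |y|})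
  simpa [Hf] using ENNReal.toReal_mono (by simp) this

lemma K_meas : Measurable (Kf μ) := by
  have h1 : Antitone (fun x => (μ (Set.Ioi x)).toReal) := fun a b hab =>
    ENNReal.toReal_mono (measure_ne_top μ _) (measure_mono (Ioi_subset_Ioi hab))
  have h2 : Antitone (fun x => (μ (Set.Iio (-x))).toReal) := fun a b hab =>
    ENNReal.toReal_mono (measure_ne_top μ _) (measure_mono (Iio_subset_Iio (by linarith)))
  exact h1.measurable.sub h2.measurable

lemma K_abs_le_one (t : ℝ) : |Kf μ t| ≤ 1 := by
  have h1 : (μ (Set.Ioi t)).toReal ≤ 1 :=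
    ENNReal.toReal_mono (by simp) (prob_le_one (μ := μ))
  have h2 : (μ (Set.Iio (-t))).toReal ≤ 1 :=
    ENNReal.toReal_mono (by simp) (prob_le_one (μ := μ))
  have h3 : 0 ≤ (μ (Set.Ioi t)).toReal := ENNReal.toReal_nonneg
  have h4 : 0 ≤ (μ (Set.Iio (-t))).toReal := ENNReal.toReal_nonneg
  rw [abs_le]; constructor <;> simp [Kf] <;> linarith

lemma bdd_intInt {f : ℝ → ℝ} (hm : Measurable f) (hb : ∀ t, |f t| ≤ 1) (a b : ℝ) :
    IntervalIntegrable f volume a b :=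
  (intervalIntegrable_const (c := (1:ℝ))).mono_fun' hm.aestronglyMeasurable
    (ae_of_all _ (by simpa using hb))

lemma H_intInt (a b : ℝ) : IntervalIntegrable (Hf μ) volume a b :=
  bdd_intInt H_meas (fun t => by rw [abs_of_nonneg (H_nonneg t)]; exact H_le_one t) a b

lemma K_intInt (a b : ℝ) : IntervalIntegrable (Kf μ) volume a b :=
  bdd_intInt K_meas K_abs_le_one a b

lemma A_cont : Continuous (Af μ) := intervalIntegral.continuous_primitive K_intInt 0

lemma ell_cont : Continuous (ellH μ) := intervalIntegral.continuous_primitive H_intInt 0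

lemma ell_mono : Monotone (ellH μ) := by
  intro a b hab
  have : ellH μ b - ellH μ a = ∫ t in a..b, Hf μ t := by
    rw [ellH, ellH, ← intervalIntegral.integral_interval_sub_left (H_intInt 0 b) (H_intInt 0 a)]
  have h0 : (0:ℝ) ≤ ∫ t in a..b, Hf μ t :=
    intervalIntegral.integral_nonneg (μ := volume) hab (fun u _ => H_nonneg (μ := μ) u)
  linarith

lemma ell_ge (x : ℝ) (hx : 0 ≤ x) : x * Hf μ x ≤ ellH μ x := by
  have h := intervalIntegral.integral_mono_on (μ := volume) (a := 0) (b := x) hx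
    (intervalIntegrable_const (c := Hf μ x)) (H_intInt 0 x)
    (fun t ht => H_anti ht.2)
  simpa [ellH] using h


lemma H_ofReal (t : ℝ) : ENNReal.ofReal (Hf μ t) = μ {y : ℝ | t < |y|} := by
  rw [Hf, ENNReal.ofReal_toReal (measure_ne_top μ _)]

lemma H_pos (hmean : ∫⁻ x, ENNReal.ofReal |x| ∂μ = ⊤) (t : ℝ) : 0 < Hf μ t := by
  rcases lt_or_ge 0 (Hf μ t) with h | h
  · exact h
  have h0 : Hf μ t = 0 := le_antisymm h (H_nonneg t)
  have hμ0 : μ {y : ℝ | t < |y|} = 0 := by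
    have := H_ofReal (μ := μ) t
    rw [h0, ENNReal.ofReal_zero] at this; exact this.symm
  have hae : ∀ᵐ y ∂μ, ENNReal.ofReal |y| ≤ ENNReal.ofReal t := by
    filter_upwards [measure_eq_zero_iff_ae_notMem.mp hμ0] with y hy
    exact ENNReal.ofReal_le_ofReal (not_lt.mp hy)
  have : ∫⁻ x, ENNReal.ofReal |x| ∂μ ≤ ENNReal.ofReal t := by
    calc ∫⁻ x, ENNReal.ofReal |x| ∂μ ≤ ∫⁻ _, ENNReal.ofReal t ∂μ := lintegral_mono_ae hae
    _ = ENNReal.ofReal t := by simp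
  rw [hmean] at this
  exact absurd (le_antisymm le_top this).symm (by simp [ENNReal.ofReal_lt_top.ne])

lemma ell_pos (hmean : ∫⁻ x, ENNReal.ofReal |x| ∂μ = ⊤) {x : ℝ} (hx : 0 < x) :
    0 < ellH μ x :=
  lt_of_lt_of_le (mul_pos hx (H_pos hmean x)) (ell_ge x hx.le)

lemma H_rightTendsto (t : ℝ) :
    Tendsto (fun n : ℕ => Hf μ (t + 1 / (n + 1))) atTop (𝓝 (Hf μ t)) := by
  have hmono : Monotone (fun n : ℕ => {y : ℝ | t + 1 / (n + 1) < |y|}) := by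
    intro m n hmn y hy
    have hc : (m:ℝ) ≤ (n:ℝ) := Nat.cast_le.mpr hmn
    have h1 : (1:ℝ) / (n + 1) ≤ 1 / (m + 1) :=
      one_div_le_one_div_of_le (by positivity) (by linarith)
    simp only [mem_setOf_eq] at hy ⊢
    linarith
  have hU : ⋃ n : ℕ, {y : ℝ | t + 1 / (n + 1) < |y|} = {y : ℝ | t < |y|} := by
    ext y
    simp only [mem_iUnion, mem_setOf_eq]
    constructor
    · rintro ⟨n, hn⟩
      have : (0:ℝ) < 1 / (n + 1) := by positivity
      linarith
    · intro hy
      obtain ⟨n, hn⟩ := exists_nat_one_div_lt (show (0:ℝ) < |y| - t by linarith)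
      exact ⟨n, by linarith⟩
  have hμ : Tendsto (fun n : ℕ => μ {y : ℝ | t + 1 / (n + 1) < |y|}) atTop
      (𝓝 (μ {y : ℝ | t < |y|})) := by
    have := tendsto_measure_iUnion_atTop (μ := μ) hmono
    rwa [hU] at this
  exact (ENNReal.tendsto_toReal (measure_ne_top μ _)).comp hμ

lemma H_rightCont (t : ℝ) : ContinuousWithinAt (Hf μ) (Ioi t) t := by
  rw [ContinuousWithinAt]
  apply tendsto_order.2
  constructor
  · intro a ha
    obtain ⟨n, hn⟩ := ((H_rightTendsto (μ := μ) t).eventually (eventually_gt_nhds ha)).exists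
    have hmem : Iio (t + 1 / (n + 1)) ∈ 𝓝[>] t := by
      apply nhdsWithin_le_nhds
      refine Iio_mem_nhds ?_
      have : (0:ℝ) < 1 / ((n:ℝ) + 1) := by positivity
      linarith
    filter_upwards [hmem] with s hs
    exact lt_of_lt_of_le hn (H_anti (le_of_lt hs))
  · intro a ha
    filter_upwards [self_mem_nhdsWithin] with s hs
    exact lt_of_le_of_lt (H_anti (le_of_lt hs)) ha

lemma ell_hasDerivWithinAt (t : ℝ) :
    HasDerivWithinAt (ellH μ) (Hf μ t) (Ici t) t := by
  exact intervalIntegral.integral_hasDerivWithinAt_right (H_intInt 0 t)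
    (H_meas.stronglyMeasurable.stronglyMeasurableAtFilter) (H_rightCont t)

lemma Hell_meas : Measurable (fun t => Hf μ t / (ellH μ t)^2) :=
  H_meas.div ((ell_cont.pow 2).measurable)

lemma Hell_nonneg (t : ℝ) : 0 ≤ Hf μ t / (ellH μ t)^2 :=
  div_nonneg (H_nonneg t) (sq_nonneg _)

lemma Hell_intInt (hmean : ∫⁻ x, ENNReal.ofReal |x| ∂μ = ⊤) {x Y : ℝ} (hx : 0 < x)
    (hxY : x ≤ Y) : IntervalIntegrable (fun t => Hf μ t / (ellH μ t)^2) volume x Y := by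
  apply (intervalIntegrable_const (c := ((ellH μ x)^2)⁻¹)).mono_fun'
    Hell_meas.aestronglyMeasurable
  have hell := ell_pos (μ := μ) hmean hx
  apply ae_restrict_of_forall_mem measurableSet_uIoc
  intro t ht
  rw [uIoc_of_le hxY] at ht
  have hellt := ell_pos (μ := μ) hmean (hx.trans ht.1)
  have h1 : ellH μ x ≤ ellH μ t := ell_mono ht.1.le
  have h2 : (0:ℝ) < (ellH μ x)^2 := by positivity
  have h4 : (ellH μ x)^2 ≤ (ellH μ t)^2 := by nlinarith
  simp only [Real.norm_eq_abs, abs_of_nonneg (Hell_nonneg (μ := μ) t)]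
  calc Hf μ t / (ellH μ t)^2 ≤ 1 / (ellH μ x)^2 :=
        div_le_div₀ zero_le_one (H_le_one t) h2 h4
  _ = ((ellH μ x)^2)⁻¹ := one_div _

lemma ellInv_ftc (hmean : ∫⁻ x, ENNReal.ofReal |x| ∂μ = ⊤) {x Y : ℝ} (hx : 0 < x)
    (hxY : x ≤ Y) :
    ∫ t in x..Y, Hf μ t / (ellH μ t)^2 = (ellH μ x)⁻¹ - (ellH μ Y)⁻¹ := by
  have hderiv : ∀ t ∈ Ioo x Y, HasDerivWithinAt (fun u => -(ellH μ u)⁻¹)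
      (Hf μ t / (ellH μ t)^2) (Ioi t) t := by
    intro t ht
    have hp := ell_pos (μ := μ) hmean (hx.trans ht.1)
    have h1 : HasDerivWithinAt (ellH μ) (Hf μ t) (Ioi t) t :=
      (ell_hasDerivWithinAt t).mono Ioi_subset_Ici_self
    have h2 := (h1.inv hp.ne').neg
    rw [show -(-Hf μ t / ellH μ t ^ 2) = Hf μ t / (ellH μ t)^2 by ring] at h2
    exact h2
  have hcont : ContinuousOn (fun u => -(ellH μ u)⁻¹) (Icc x Y) :=
    ((ell_cont.continuousOn).inv₀
      (fun t ht => (ell_pos hmean (lt_of_lt_of_le hx ht.1)).ne')).neg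
  rw [intervalIntegral.integral_eq_sub_of_hasDeriv_right_of_le hxY hcont hderiv
    (Hell_intInt hmean hx hxY)]
  ring

lemma lintegral_Ioi_iSup {F : ℝ → ENNReal} (hF : Measurable F) (x : ℝ) :
    ∫⁻ t in Ioi x, F t = ⨆ n : ℕ, ∫⁻ t in Ioc x (x + n), F t := by
  have hmono : Monotone (fun n : ℕ => (Ioc x (x + n)).indicator F) := by
    intro m n hmn
    apply indicator_le_indicator_of_subset
    · exact Ioc_subset_Ioc le_rfl (by have := Nat.cast_le (α := ℝ).mpr hmn; linarith)
    · exact fun t => zero_le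
  have heq : ∀ t ∈ Ioi x, F t = ⨆ n : ℕ, (Ioc x (x + n)).indicator F t := by
    intro t ht
    obtain ⟨n, hn⟩ := exists_nat_ge (t - x)
    apply le_antisymm
    · refine le_trans ?_ (le_iSup _ n)
      rw [indicator_of_mem (show t ∈ Ioc x (x+(n:ℝ)) from ⟨ht, by linarith⟩) F]
    · exact iSup_le fun n => indicator_le_self _ _ t
  rw [setLIntegral_congr_fun measurableSet_Ioi heq,
    lintegral_iSup (fun n => hF.indicator measurableSet_Ioc) hmono]
  congr 1
  ext n
  rw [lintegral_indicator measurableSet_Ioc, Measure.restrict_restrict measurableSet_Ioc,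
    inter_eq_left.mpr (Ioc_subset_Ioi_self)]

lemma ell_intervalInt_eq (x : ℝ) (hx : 0 ≤ x) :
    ∫⁻ t in Ioc 0 x, ENNReal.ofReal (Hf μ t) = ENNReal.ofReal (ellH μ x) := by
  rw [← ofReal_integral_eq_lintegral_ofReal (H_intInt 0 x).1
    (ae_of_all _ (fun t => H_nonneg t))]
  congr 1
  rw [ellH, intervalIntegral.integral_of_le hx]

lemma ell_unbounded (hmean : ∫⁻ x, ENNReal.ofReal |x| ∂μ = ⊤) (M : ℝ) :
    ∃ Y : ℝ, M < ellH μ Y := by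
  by_contra h
  push_neg at h
  have hM : ∀ n : ℕ, ∫⁻ t in Ioc (0:ℝ) ((0:ℝ) + n), ENNReal.ofReal (Hf μ t)
      ≤ ENNReal.ofReal M := by
    intro n
    rw [zero_add, ell_intervalInt_eq (n : ℝ) (by positivity)]
    exact ENNReal.ofReal_le_ofReal (h _)
  have htop : ∫⁻ t in Ioi (0:ℝ), ENNReal.ofReal (Hf μ t) = ⊤ := by
    have hlc := lintegral_eq_lintegral_meas_lt μ (f := fun y => |y|)
      (ae_of_all _ (fun y => abs_nonneg y)) measurable_abs.aemeasurable
    rw [hmean] at hlc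
    rw [show (fun t => ENNReal.ofReal (Hf μ t)) = fun t => μ {y : ℝ | t < |y|} from
      funext (fun t => H_ofReal t)]
    exact hlc.symm
  rw [lintegral_Ioi_iSup (F := fun t => ENNReal.ofReal (Hf μ t)) (ENNReal.measurable_ofReal.comp H_meas)] at htop
  have : (⊤ : ENNReal) ≤ ENNReal.ofReal M := htop ▸ iSup_le hM
  exact absurd (le_antisymm le_top this).symm (by simp [ENNReal.ofReal_lt_top.ne])

lemma Hell_tail (hmean : ∫⁻ x, ENNReal.ofReal |x| ∂μ = ⊤) {x : ℝ} (hx : 0 < x) :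
    IntegrableOn (fun t => Hf μ t / (ellH μ t)^2) (Ioi x) ∧
      (∫ t in Ioi x, Hf μ t / (ellH μ t)^2) ≤ (ellH μ x)⁻¹ := by
  have hell := ell_pos (μ := μ) hmean hx
  have hbd : ∫⁻ t in Ioi x, ENNReal.ofReal (Hf μ t / (ellH μ t)^2)
      ≤ ENNReal.ofReal (ellH μ x)⁻¹ := by
    rw [lintegral_Ioi_iSup (F := fun t => ENNReal.ofReal (Hf μ t / (ellH μ t)^2)) (ENNReal.measurable_ofReal.comp Hell_meas)]
    apply iSup_le
    intro n
    have hxn : x ≤ x + n := le_add_of_nonneg_right (Nat.cast_nonneg n)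
    have hInt : IntegrableOn (fun t => Hf μ t / (ellH μ t)^2) (Ioc x (x + n)) :=
      (Hell_intInt hmean hx hxn).1
    rw [← ofReal_integral_eq_lintegral_ofReal hInt (ae_of_all _ (fun t => Hell_nonneg t))]
    apply ENNReal.ofReal_le_ofReal
    rw [← intervalIntegral.integral_of_le hxn, ellInv_ftc hmean hx hxn]
    have : 0 ≤ (ellH μ (x + n))⁻¹ :=
      inv_nonneg.mpr (ell_pos hmean (lt_of_lt_of_le hx hxn)).le
    linarith
  have hint : IntegrableOn (fun t => Hf μ t / (ellH μ t)^2) (Ioi x) := by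
    refine ⟨Hell_meas.aestronglyMeasurable, ?_⟩
    rw [hasFiniteIntegral_iff_ofReal (ae_of_all _ (fun t => Hell_nonneg t))]
    exact lt_of_le_of_lt hbd ENNReal.ofReal_lt_top
  refine ⟨hint, ?_⟩
  rw [integral_eq_lintegral_of_nonneg_ae (ae_of_all _ (fun t => Hell_nonneg t))
    Hell_meas.aestronglyMeasurable]
  calc (∫⁻ t in Ioi x, ENNReal.ofReal (Hf μ t / (ellH μ t)^2)).toReal
      ≤ (ENNReal.ofReal (ellH μ x)⁻¹).toReal :=
        ENNReal.toReal_mono ENNReal.ofReal_ne_top hbd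
  _ = (ellH μ x)⁻¹ := ENNReal.toReal_ofReal (inv_nonneg.mpr hell.le)

lemma cauchy_schwarz_int {ν : Measure ℝ} {f g : ℝ → ℝ} (hfm : AEStronglyMeasurable f ν)
    (hgm : AEStronglyMeasurable g ν) (hf2 : Integrable (fun t => f t ^ 2) ν)
    (hg2 : Integrable (fun t => g t ^ 2) ν) :
    Integrable (fun t => f t * g t) ν ∧
    (∫ t, f t * g t ∂ν)^2 ≤ (∫ t, f t ^ 2 ∂ν) * (∫ t, g t ^ 2 ∂ν) := by
  have hfg : Integrable (fun t => f t * g t) ν := by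
    apply Integrable.mono' ((hf2.add hg2).const_mul (1/2)) (hfm.mul hgm)
    apply ae_of_all
    intro t
    simp only [Pi.mul_apply, Pi.add_apply]
    rw [Real.norm_eq_abs, abs_mul]
    nlinarith [sq_nonneg (|f t| - |g t|), sq_abs (f t), sq_abs (g t),
      abs_nonneg (f t), abs_nonneg (g t)]
  refine ⟨hfg, ?_⟩
  set a := ∫ t, f t ^ 2 ∂ν with ha_def
  set b := ∫ t, f t * g t ∂ν with hb_def
  set c := ∫ t, g t ^ 2 ∂ν with hc_def
  have ha : 0 ≤ a := integral_nonneg (fun t => sq_nonneg _)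
  have hc : 0 ≤ c := integral_nonneg (fun t => sq_nonneg _)
  rcases eq_or_lt_of_le hc with hc0 | hcpos
  · have hg0 : (fun t => g t ^ 2) =ᵐ[ν] 0 :=
      (integral_eq_zero_iff_of_nonneg (fun t => sq_nonneg _) hg2).mp hc0.symm
    have hb0 : b = 0 := by
      rw [hb_def]
      apply integral_eq_zero_of_ae
      filter_upwards [hg0] with t ht
      have : g t = 0 := by
        have := ht
        simp only [Pi.zero_apply, pow_eq_zero_iff (two_ne_zero)] at this
        exact this
      simp [this]
    rw [hb0, ← hc0]
    simp
  · have key : 0 ≤ ∫ t, (c * f t - b * g t)^2 ∂ν := integral_nonneg fun t => sq_nonneg _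
    have hexp : ∫ t, (c * f t - b * g t)^2 ∂ν = c^2*a - 2*c*b*b + b^2*c := by
      have heq : (fun t => (c * f t - b * g t)^2)
          = fun t => (c^2 * f t^2 - (2*c*b) * (f t * g t)) + b^2 * g t^2 := by
        funext t; ring
      have hI3 : Integrable (fun t => c^2 * f t^2) ν := hf2.const_mul _
      have hI4 : Integrable (fun t => (2*c*b) * (f t * g t)) ν := hfg.const_mul _
      have hI1 : Integrable (fun t => c^2 * f t^2 - (2*c*b) * (f t * g t)) ν := hI3.sub hI4
      have hI2 : Integrable (fun t => b^2 * g t^2) ν := hg2.const_mul _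
      rw [heq, integral_add hI1 hI2, integral_sub hI3 hI4, integral_const_mul _ _,
        integral_const_mul _ _, integral_const_mul _ _, ← ha_def, ← hb_def, ← hc_def]
    nlinarith [key, sq_nonneg b]

theorem stmt12' (μ : Measure ℝ) [IsProbabilityMeasure μ]
    (hmean : ∫⁻ x, ENNReal.ofReal |x| ∂μ = ⊤)
    (hHb : ∃ x₀ : ℝ, 0 < x₀ ∧ (∀ x ≥ x₀, 0 < Af μ x) ∧
      IntegrableOn (fun x => Hf μ x / (Af μ x) ^ 2) (Set.Ioi x₀)) :
    (∀ᶠ x in atTop,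
      (∫ t in Set.Ioi x, Hf μ t / (ellH μ t * Af μ t)) ^ 2
        ≤ 1 / ((∫ t in Set.Ioi x, Hf μ t / (Af μ t) ^ 2)⁻¹ * ellH μ x)) ∧
    ((∃ C : ℝ, 0 < C ∧ ∃ x₀ : ℝ, ∀ x y : ℝ, x₀ < x → x < y →
        ellH μ x / Af μ x ≤ C * (ellH μ y / Af μ y)) →
      ∃ C' : ℝ, C' > 0 ∧ ∀ᶠ x in atTop,
        (∫ t in Set.Ioi x, Hf μ t / (Af μ t) ^ 2)⁻¹ * ellH μ x ≤ C' * (Af μ x) ^ 2) := by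
  obtain ⟨x₀, hx₀pos, hApos, hAint⟩ := hHb
  constructor
  · filter_upwards [eventually_gt_atTop (max x₀ 1)] with x hx
    have hx0 : (0:ℝ) < x := lt_of_lt_of_le one_pos (le_of_lt (lt_of_le_of_lt (le_max_right x₀ 1) hx))
    have hxx₀ : x₀ < x := lt_of_le_of_lt (le_max_left x₀ 1) hx
    have hell := ell_pos (μ := μ) hmean hx0
    have hIa : IntegrableOn (fun t => Hf μ t / (Af μ t)^2) (Ioi x) volume :=
      hAint.mono_set (Ioi_subset_Ioi hxx₀.le)
    obtain ⟨hJi, hJle⟩ := Hell_tail (μ := μ) hmean hx0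
    set I := ∫ t in Ioi x, Hf μ t / (Af μ t)^2 with hI_def
    set J := ∫ t in Ioi x, Hf μ t / (ellH μ t)^2 with hJ_def
    have hIpos : 0 < I := by
      rw [hI_def, setIntegral_pos_iff_support_of_nonneg_ae
        (ae_of_all _ fun t => div_nonneg (H_nonneg t) (sq_nonneg _)) hIa]
      have hsub : Ioi x ⊆ Function.support (fun t => Hf μ t / (Af μ t)^2) := by
        intro t ht
        have hAt := hApos t (le_of_lt (lt_of_lt_of_le hxx₀ ht.le))
        have hHt := H_pos (μ := μ) hmean t
        simp only [Function.mem_support]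
        positivity
      rw [inter_eq_right.mpr hsub, Real.volume_Ioi]
      simp
    set u := fun t => Real.sqrt (Hf μ t) / Af μ t with hu_def
    set v := fun t => Real.sqrt (Hf μ t) / ellH μ t with hv_def
    have hu2 : (fun t => u t ^ 2) = fun t => Hf μ t / (Af μ t)^2 := by
      funext t; rw [hu_def]; rw [div_pow, Real.sq_sqrt (H_nonneg t)]
    have hv2 : (fun t => v t ^ 2) = fun t => Hf μ t / (ellH μ t)^2 := by
      funext t; rw [hv_def]; rw [div_pow, Real.sq_sqrt (H_nonneg t)]
    have huv : (fun t => u t * v t) = fun t => Hf μ t / (ellH μ t * Af μ t) := by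
      funext t
      rw [hu_def, hv_def, div_mul_div_comm, Real.mul_self_sqrt (H_nonneg t), mul_comm (Af μ t)]
    have hum : AEStronglyMeasurable u (volume.restrict (Ioi x)) :=
      ((Real.continuous_sqrt.measurable.comp H_meas).div A_cont.measurable).aestronglyMeasurable
    have hvm : AEStronglyMeasurable v (volume.restrict (Ioi x)) :=
      ((Real.continuous_sqrt.measurable.comp H_meas).div ell_cont.measurable).aestronglyMeasurable
    have hu2i : Integrable (fun t => u t ^ 2) (volume.restrict (Ioi x)) := by rw [hu2]; exact hIa
    have hv2i : Integrable (fun t => v t ^ 2) (volume.restrict (Ioi x)) := by rw [hv2]; exact hJi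
    obtain ⟨_, hCS⟩ := cauchy_schwarz_int hum hvm hu2i hv2i
    have hEq : (∫ t in Ioi x, Hf μ t / (ellH μ t * Af μ t)) = ∫ t in Ioi x, u t * v t := by
      rw [huv]
    rw [hEq]
    calc (∫ t in Ioi x, u t * v t)^2
        ≤ (∫ t in Ioi x, u t ^ 2) * (∫ t in Ioi x, v t ^ 2) := hCS
      _ = I * J := by rw [hu2, hv2]
      _ ≤ I * (ellH μ x)⁻¹ := mul_le_mul_of_nonneg_left hJle hIpos.le
      _ = 1 / (I⁻¹ * ellH μ x) := by
          rw [one_div, mul_inv, inv_inv]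
  · rintro ⟨C, hC, x₁, hInc⟩
    refine ⟨2 * C^2, by positivity, ?_⟩
    filter_upwards [eventually_gt_atTop (max (max x₀ 1) x₁)] with x hx
    have hx' : max x₀ 1 < x := lt_of_le_of_lt (le_max_left _ _) hx
    have hx0 : (0:ℝ) < x := lt_of_lt_of_le one_pos (le_of_lt (lt_of_le_of_lt (le_max_right x₀ 1) hx'))
    have hxx₀ : x₀ < x := lt_of_le_of_lt (le_max_left x₀ 1) hx'
    have hxx₁ : x₁ < x := lt_of_le_of_lt (le_max_right _ _) hx
    have hell := ell_pos (μ := μ) hmean hx0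
    have hA := hApos x hxx₀.le
    obtain ⟨Y₀, hY₀⟩ := ell_unbounded (μ := μ) hmean (2 * ellH μ x)
    set Y := max Y₀ (x + 1) with hY_def
    have hxY : x < Y := lt_of_lt_of_le (lt_add_one x) (le_max_right _ _)
    have hellY : 2 * ellH μ x ≤ ellH μ Y := le_trans hY₀.le (ell_mono (le_max_left _ _))
    have hellYpos : 0 < ellH μ Y := lt_of_lt_of_le (by linarith) hellY
    set r := ellH μ x / (C * Af μ x) with hr_def
    have hrpos : 0 < r := by rw [hr_def]; positivity
    have hIa : IntegrableOn (fun t => Hf μ t / (Af μ t)^2) (Ioi x) volume :=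
      hAint.mono_set (Ioi_subset_Ioi hxx₀.le)
    obtain ⟨hJi, _⟩ := Hell_tail (μ := μ) hmean hx0
    set I := ∫ t in Ioi x, Hf μ t / (Af μ t)^2 with hI_def
    have hmono1 : ∫ t in Ioc x Y, r^2 * (Hf μ t / (ellH μ t)^2)
        ≤ ∫ t in Ioc x Y, Hf μ t / (Af μ t)^2 := by
      apply setIntegral_mono_on
        ((hJi.mono_set Ioc_subset_Ioi_self).const_mul _)
        (hIa.mono_set Ioc_subset_Ioi_self) measurableSet_Ioc
      intro t ht
      have hAt := hApos t (le_of_lt (lt_of_lt_of_le hxx₀ ht.1.le))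
      have hellt := ell_pos (μ := μ) hmean (hx0.trans ht.1)
      have h5 : r ≤ ellH μ t / Af μ t := by
        have := hInc x t hxx₁ ht.1
        rw [hr_def]
        rw [div_le_iff₀ (by positivity), mul_comm C (Af μ x)] at *
        nlinarith [div_nonneg hell.le (le_of_lt hA)]
      have h6 : r^2 ≤ (ellH μ t / Af μ t)^2 := pow_le_pow_left₀ hrpos.le h5 2
      calc r^2 * (Hf μ t / (ellH μ t)^2)
          ≤ (ellH μ t / Af μ t)^2 * (Hf μ t / (ellH μ t)^2) :=
            mul_le_mul_of_nonneg_right h6 (Hell_nonneg t)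
        _ = Hf μ t / (Af μ t)^2 := by
            field_simp
    have hval : ∫ t in Ioc x Y, r^2 * (Hf μ t / (ellH μ t)^2)
        = r^2 * ((ellH μ x)⁻¹ - (ellH μ Y)⁻¹) := by
      rw [integral_const_mul, ← intervalIntegral.integral_of_le hxY.le,
        ellInv_ftc hmean hx0 hxY.le]
    have hlow : r^2 * (2 * ellH μ x)⁻¹ ≤ I := by
      have h7 : (ellH μ Y)⁻¹ ≤ (2 * ellH μ x)⁻¹ := by
        apply inv_anti₀ (by linarith) hellY
      have h8 : r^2 * (2 * ellH μ x)⁻¹ ≤ r^2 * ((ellH μ x)⁻¹ - (ellH μ Y)⁻¹) := by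
        have h9 : (2 * ellH μ x)⁻¹ ≤ (ellH μ x)⁻¹ - (ellH μ Y)⁻¹ := by
          have h10 : (2 * ellH μ x)⁻¹ = (ellH μ x)⁻¹ - (2*ellH μ x)⁻¹ := by
            field_simp; ring
          linarith
        exact mul_le_mul_of_nonneg_left h9 (sq_nonneg r)
      calc r^2 * (2 * ellH μ x)⁻¹ ≤ r^2 * ((ellH μ x)⁻¹ - (ellH μ Y)⁻¹) := h8
        _ = ∫ t in Ioc x Y, r^2 * (Hf μ t / (ellH μ t)^2) := hval.symm
        _ ≤ ∫ t in Ioc x Y, Hf μ t / (Af μ t)^2 := hmono1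
        _ ≤ I := setIntegral_mono_set hIa
            (ae_of_all _ fun t => div_nonneg (H_nonneg t) (sq_nonneg _))
            (HasSubset.Subset.eventuallyLE Ioc_subset_Ioi_self)
    have hlowpos : 0 < r^2 * (2 * ellH μ x)⁻¹ := by positivity
    have hIinv : I⁻¹ ≤ (r^2 * (2 * ellH μ x)⁻¹)⁻¹ := inv_anti₀ hlowpos hlow
    calc I⁻¹ * ellH μ x ≤ (r^2 * (2 * ellH μ x)⁻¹)⁻¹ * ellH μ x :=
          mul_le_mul_of_nonneg_right hIinv hell.le
      _ = 2 * C^2 * (Af μ x)^2 := by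
          rw [hr_def]
          field_simp

end lems

/-- Under (Ha) and (Hb): Schwarz's inequality
`1/(m(x)ℓ(x)) ≥ (∫ₓ^∞ H(t)/(ℓ(t)A(t)) dt)²` holds for large `x`; consequently,
if `ℓ/A` is almost increasing then `m(x)ℓ(x) ≤ C' A²(x)` for all large `x`. -/
theorem stmt12 (μ : Measure ℝ) [IsProbabilityMeasure μ]
    (hmean : ∫⁻ x, ENNReal.ofReal |x| ∂μ = ⊤)
    (hHa : HaCond μ) (hHb : HbCond μ) :
    (∀ᶠ x in atTop,
      (∫ t in Set.Ioi x, Hf μ t / (ellH μ t * Af μ t)) ^ 2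
        ≤ 1 / (mF μ x * ellH μ x)) ∧
    ((∃ C : ℝ, 0 < C ∧ ∃ x₀ : ℝ, ∀ x y : ℝ, x₀ < x → x < y →
        ellH μ x / Af μ x ≤ C * (ellH μ y / Af μ y)) →
      ∃ C' : ℝ, C' > 0 ∧ ∀ᶠ x in atTop, mF μ x * ellH μ x ≤ C' * (Af μ x) ^ 2) :=
  stmt12' μ hmean hHb
end
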